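/- arXiv:math/0607433 — 3 statements merged into one kernel-verified Lean document; each statement's English description precedes it below -/
import Mathlib

section
/- Assume the setting. If ℳ = (𝒰₀,…,𝒰_{r−1}) and ℳ′ = (𝒰′₀,…,𝒰′_{r′−1}) are minimal domains such that 𝒰_i ∩ 𝒰′_j ≠ ∅ for some 0 ≤ i ≤ r−1 and 0 ≤ j ≤ r′−1, then ℳ and ℳ′ coincide up to cyclic shift (in particular r = r′ and ⋃ℳ = ⋃ℳ′). Consequently, minimal domains that do not coincide up to cyclic shift have disjoint unions. -/
open MeasureTheory Metric Set Filter Topology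

noncomputable section

/-- The parameter space `T`: the closed `ε`-ball around `a` in `ℝⁿ`. -/
abbrev PSpace (n : ℕ) (a : EuclideanSpace ℝ (Fin n)) (ε : ℝ) : Type _ :=
  ↥(Metric.closedBall a ε)

/-- Perturbed iterates: `pIter f k z t = f_{t_k} ∘ ⋯ ∘ f_{t_1} (z)`
(the sequence `t` is indexed from `0` here). -/
def pIter {M T : Type*} (f : M → T → M) : ℕ → M → (ℕ → T) → M
  | 0, z, _ => z
  | k + 1, z, t => f (pIter f k z t) (t k)

/-- An s-invariant domain for the randomly perturbed system: a finite tuple of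
nonempty open sets with pairwise disjoint closures, permuted cyclically by all
perturbed iterates. -/
structure SInvDomain {M T : Type*} [TopologicalSpace M] (f : M → T → M) where
  r : ℕ
  r_pos : 0 < r
  U : Fin r → Set M
  isOpen : ∀ i, IsOpen (U i)
  nonempty : ∀ i, (U i).Nonempty
  separated : ∀ i j : Fin r, i ≠ j → closure (U i) ∩ closure (U j) = ∅
  invariant : ∀ k : ℕ, 1 ≤ k → ∀ i : Fin r, ∀ z ∈ U i, ∀ t : ℕ → T,
    pIter f k z t ∈ U ⟨((i : ℕ) + k) % r, Nat.mod_lt _ r_pos⟩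

/-- The union `⋃D` of the open sets forming an s-invariant domain. -/
def SInvDomain.carrier {M T : Type*} [TopologicalSpace M] {f : M → T → M}
    (D : SInvDomain f) : Set M := ⋃ i, D.U i

/-- The partial order `D ⪯ D'` on s-invariant domains. -/
def DomLE {M T : Type*} [TopologicalSpace M] {f : M → T → M}
    (D D' : SInvDomain f) : Prop :=
  ∃ i i' : ℕ, ∀ k : ℕ, 1 ≤ k →
    D.U ⟨(i + k) % D.r, Nat.mod_lt _ D.r_pos⟩ ⊆ D'.U ⟨(i' + k) % D'.r, Nat.mod_lt _ D'.r_pos⟩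

/-- Two s-invariant domains coincide up to cyclic shift. -/
def CyclicEq {M T : Type*} [TopologicalSpace M] {f : M → T → M}
    (D D' : SInvDomain f) : Prop :=
  ∃ i i' : ℕ, ∀ k : ℕ, 1 ≤ k →
    D.U ⟨(i + k) % D.r, Nat.mod_lt _ D.r_pos⟩ = D'.U ⟨(i' + k) % D'.r, Nat.mod_lt _ D'.r_pos⟩

/-- A minimal invariant domain. -/
def MinimalDom {M T : Type*} [TopologicalSpace M] {f : M → T → M}
    (D : SInvDomain f) : Prop :=
  ∀ D' : SInvDomain f, DomLE D' D → CyclicEq D' D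

/-- A c-invariant (completely invariant) set. -/
def CInvariant {M T : Type*} (f : M → T → M) (C : Set M) : Prop :=
  ∀ x ∈ C, ∀ t : ℕ → T, ∀ k : ℕ, 1 ≤ k → pIter f k x t ∈ C

/-- The ω-limit of a point under a fixed perturbation vector. -/
def omegaPt {M T : Type*} [TopologicalSpace M] (f : M → T → M) (z : M) (t : ℕ → T) : Set M :=
  {w | ∃ nseq : ℕ → ℕ, StrictMono nseq ∧
    Tendsto (fun j => pIter f (nseq j) z t) atTop (𝓝 w)}

/-- The ω-limit of a set under a fixed perturbation vector. -/
def omegaSet {M T : Type*} [TopologicalSpace M] (f : M → T → M) (U : Set M) (t : ℕ → T) :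
    Set M :=
  {w | ∃ (u : ℕ → M) (nseq : ℕ → ℕ), (∀ j, u j ∈ U) ∧ StrictMono nseq ∧
    Tendsto (fun j => pIter f (nseq j) (u j) t) atTop (𝓝 w)}

/-- The ω-limit of a set under all perturbation vectors. -/
def omegaSetAll {M T : Type*} [TopologicalSpace M] (f : M → T → M) (U : Set M) : Set M :=
  {w | ∃ (u : ℕ → M) (ts : ℕ → ℕ → T) (nseq : ℕ → ℕ), (∀ j, u j ∈ U) ∧ StrictMono nseq ∧
    Tendsto (fun j => pIter f (nseq j) (u j) (ts j)) atTop (𝓝 w)}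

/-- A stationary probability measure for the perturbed system. -/
def Stationary {M T : Type*} [TopologicalSpace M] [MeasurableSpace M] [MeasurableSpace T]
    (f : M → T → M) (ν : Measure T) (μ : Measure M) : Prop :=
  ∀ φ : C(M, ℝ), ∫ z, (∫ t, φ (f z t) ∂ν) ∂μ = ∫ z, φ z ∂μ

/-- The skew product map `S(z,t) = (f_{t₁}(z), σ t)`. -/
def skewProd {M T : Type*} (f : M → T → M) : M × (ℕ → T) → M × (ℕ → T) :=
  fun p => (f p.1 (p.2 0), fun i => p.2 (i + 1))

/-- The support of a measure: points all of whose open neighbourhoods have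
positive measure. -/
def msupport {M : Type*} [TopologicalSpace M] [MeasurableSpace M] (μ : Measure M) : Set M :=
  {x | ∀ O : Set M, IsOpen O → x ∈ O → 0 < μ O}

/-- The ergodic basin `E(μ)` of a stationary measure: points whose time averages along
`ν^∞`-a.e. perturbed orbit converge to the space average of every continuous function. -/
def basin {M T : Type*} [TopologicalSpace M] [MeasurableSpace M] [MeasurableSpace T]
    (f : M → T → M) (νinf : Measure (ℕ → T)) (μ : Measure M) : Set M :=
  {x | ∀ᵐ t ∂νinf, ∀ φ : C(M, ℝ),
    Tendsto (fun nn : ℕ => (nn : ℝ)⁻¹ * ∑ j ∈ Finset.range nn, φ (pIter f j x t))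
      atTop (𝓝 (∫ z, φ z ∂μ))}

/-!
Two minimal domains whose sets meet contain a common s-invariant domain: with `L = lcm r r'`,
the sets `𝒰_{i+l} ∩ 𝒰'_{j+l}` (`l < L`) are nonempty because orbits of a common point run through
them, they are separated because `l` is determined by its residues mod `r` and `r'`, and they
are permuted cyclically. By minimality this common refinement coincides up to cyclic shift with
both `ℳ` and `ℳ'`, hence so do `ℳ` and `ℳ'`.
-/

namespace SInvDomain

variable {M T : Type*} [TopologicalSpace M] {f : M → T → M}

def piece (D : SInvDomain f) (k : ℕ) : Set M :=
  D.U ⟨k % D.r, Nat.mod_lt _ D.r_pos⟩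

theorem piece_congr (D : SInvDomain f) {k l : ℕ} (h : k ≡ l [MOD D.r]) :
    D.piece k = D.piece l := by
  unfold piece
  congr 2

theorem piece_val (D : SInvDomain f) (i : Fin D.r) : D.piece i = D.U i := by
  simp only [piece, Nat.mod_eq_of_lt i.isLt]

theorem disjoint_closure_piece (D : SInvDomain f) {k l : ℕ} (h : ¬ k ≡ l [MOD D.r]) :
    Disjoint (closure (D.piece k)) (closure (D.piece l)) :=
  Set.disjoint_iff_inter_eq_empty.2 <| D.separated _ _ fun e => h (congrArg Fin.val e)

theorem modEq_of_piece_eq (D : SInvDomain f) {k l : ℕ} (h : D.piece k = D.piece l) :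
    k ≡ l [MOD D.r] := by
  by_contra hkl
  obtain ⟨z, hz⟩ := D.nonempty ⟨k % D.r, Nat.mod_lt _ D.r_pos⟩
  have hz' : z ∈ D.piece l := h ▸ hz
  exact (D.disjoint_closure_piece hkl).ne_of_mem (subset_closure hz) (subset_closure hz') rfl

theorem pIter_mem_piece (D : SInvDomain f) {k : ℕ} (hk : 1 ≤ k) {i : ℕ} {z : M}
    (hz : z ∈ D.piece i) (t : ℕ → T) : pIter f k z t ∈ D.piece (i + k) := by
  have h : pIter f k z t ∈ D.piece (i % D.r + k) := D.invariant k hk _ z hz t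
  rwa [D.piece_congr ((Nat.mod_modEq i D.r).add_right k)] at h

end SInvDomain

open SInvDomain

section Shifts

variable {M T : Type*} [TopologicalSpace M] {f : M → T → M} {D D' D'' : SInvDomain f}

theorem DomLE.of_shift (s : ℕ) (h : ∀ k, D.piece k ⊆ D'.piece (s + k)) : DomLE D D' :=
  ⟨0, s, fun k _ => by
    show D.piece (0 + k) ⊆ D'.piece (s + k)
    rw [zero_add]
    exact h k⟩

theorem CyclicEq.of_shift (s : ℕ) (h : ∀ k, D.piece k = D'.piece (s + k)) : CyclicEq D D' :=
  ⟨0, s, fun k _ => by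
    show D.piece (0 + k) = D'.piece (s + k)
    rw [zero_add]
    exact h k⟩

theorem CyclicEq.exists_shift (h : CyclicEq D D') : ∃ s, ∀ k, D.piece k = D'.piece (s + k) := by
  obtain ⟨p, q, h⟩ := h
  set c := D.r - p % D.r
  have hc : 1 ≤ c := Nat.sub_pos_of_lt (Nat.mod_lt p D.r_pos)
  have hpc : p + c = D.r * (p / D.r + 1) := by
    have := Nat.div_add_mod p D.r
    have := Nat.mod_lt p D.r_pos
    rw [Nat.mul_succ]
    omega
  refine ⟨q + c, fun k => ?_⟩
  have hk : k ≡ p + (k + c) [MOD D.r] := by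
    rw [add_left_comm, hpc]
    exact (Nat.add_mul_mod_self_left k D.r _).symm
  calc D.piece k = D.piece (p + (k + c)) := D.piece_congr hk
    _ = D'.piece (q + (k + c)) := h _ (by omega)
    _ = D'.piece (q + c + k) := by congr 1; omega

theorem CyclicEq.symm (h : CyclicEq D D') : CyclicEq D' D := by
  obtain ⟨p, q, h⟩ := h
  exact ⟨q, p, fun k hk => (h k hk).symm⟩

theorem CyclicEq.trans (h : CyclicEq D D') (h' : CyclicEq D' D'') : CyclicEq D D'' := by
  obtain ⟨s, hs⟩ := h.exists_shift
  obtain ⟨s', hs'⟩ := h'.exists_shift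
  exact .of_shift (s' + s) fun k => by rw [hs, hs', add_assoc]

theorem CyclicEq.r_dvd (h : CyclicEq D D') : D'.r ∣ D.r := by
  obtain ⟨s, hs⟩ := h.exists_shift
  have h0 : D'.piece (s + 0) = D'.piece (s + D.r) := by
    rw [← hs, ← hs]
    exact D.piece_congr (dvd_refl D.r).zero_modEq_nat
  exact Nat.modEq_zero_iff_dvd.1 (D'.modEq_of_piece_eq h0).add_left_cancel'.symm

theorem CyclicEq.r_eq (h : CyclicEq D D') : D.r = D'.r :=
  Nat.dvd_antisymm h.symm.r_dvd h.r_dvd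

theorem CyclicEq.carrier_subset (h : CyclicEq D D') : D.carrier ⊆ D'.carrier := by
  obtain ⟨s, hs⟩ := h.exists_shift
  intro z hz
  obtain ⟨i, hi⟩ := mem_iUnion.1 hz
  rw [← D.piece_val, hs] at hi
  exact mem_iUnion.2 ⟨_, hi⟩

theorem CyclicEq.carrier_eq (h : CyclicEq D D') : D.carrier = D'.carrier :=
  h.carrier_subset.antisymm h.symm.carrier_subset

end Shifts

namespace SInvDomain

variable {M T : Type*} [TopologicalSpace M] {f : M → T → M} (D D' : SInvDomain f)
  {i j : ℕ}

theorem piece_inter_nonempty [Nonempty T] (hij : (D.piece i ∩ D'.piece j).Nonempty) (l : ℕ) :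
    (D.piece (i + l) ∩ D'.piece (j + l)).Nonempty := by
  obtain ⟨z, hz, hz'⟩ := hij
  obtain ⟨t⟩ := ‹Nonempty T›
  set L := Nat.lcm D.r D'.r
  have hL : 0 < L := Nat.lcm_pos D.r_pos D'.r_pos
  have hmem := D.pIter_mem_piece (k := l + L) (by omega) hz fun _ => t
  have hmem' := D'.pIter_mem_piece (k := l + L) (by omega) hz' fun _ => t
  rw [← add_assoc, D.piece_congr (((Nat.dvd_lcm_left _ _).modEq_zero_nat).add_left _)] at hmem
  rw [← add_assoc, D'.piece_congr (((Nat.dvd_lcm_right _ _).modEq_zero_nat).add_left _)] at hmem'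
  exact ⟨_, hmem, hmem'⟩

theorem pIter_mem_piece_inter {k : ℕ} (hk : 1 ≤ k) {l : ℕ} {z : M}
    (hz : z ∈ D.piece (i + l) ∩ D'.piece (j + l)) (t : ℕ → T) :
    pIter f k z t ∈
      D.piece (i + (l + k) % Nat.lcm D.r D'.r) ∩ D'.piece (j + (l + k) % Nat.lcm D.r D'.r) := by
  have hmod := Nat.mod_modEq (l + k) (Nat.lcm D.r D'.r)
  refine ⟨?_, ?_⟩
  · rw [D.piece_congr ((hmod.of_dvd (Nat.dvd_lcm_left _ _)).add_left i), ← add_assoc]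
    exact D.pIter_mem_piece hk hz.1 t
  · rw [D'.piece_congr ((hmod.of_dvd (Nat.dvd_lcm_right _ _)).add_left j), ← add_assoc]
    exact D'.pIter_mem_piece hk hz.2 t

theorem closure_piece_inter_disjoint {l l' : ℕ} (hl : l < Nat.lcm D.r D'.r)
    (hl' : l' < Nat.lcm D.r D'.r) (hne : l ≠ l') :
    Disjoint (closure (D.piece (i + l) ∩ D'.piece (j + l)))
      (closure (D.piece (i + l') ∩ D'.piece (j + l'))) := by
  by_cases h : i + l ≡ i + l' [MOD D.r]
  · by_cases h' : j + l ≡ j + l' [MOD D'.r]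
    · exact absurd (Nat.ModEq.eq_of_lt_of_lt
        (Nat.mod_lcm (h.add_left_cancel' i) (h'.add_left_cancel' j)) hl hl') hne
    · exact (D'.disjoint_closure_piece h').mono (closure_mono inter_subset_right)
        (closure_mono inter_subset_right)
  · exact (D.disjoint_closure_piece h).mono (closure_mono inter_subset_left)
      (closure_mono inter_subset_left)

def meet [Nonempty T] (hij : (D.piece i ∩ D'.piece j).Nonempty) : SInvDomain f where
  r := Nat.lcm D.r D'.r
  r_pos := Nat.lcm_pos D.r_pos D'.r_pos
  U l := D.piece (i + l) ∩ D'.piece (j + l)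
  isOpen _ := (D.isOpen _).inter (D'.isOpen _)
  nonempty l := D.piece_inter_nonempty D' hij l
  separated l l' hne :=
    Set.disjoint_iff_inter_eq_empty.1 <|
      D.closure_piece_inter_disjoint D' l.isLt l'.isLt (Fin.val_injective.ne hne)
  invariant _ hk _ _ hz t := D.pIter_mem_piece_inter D' hk hz t

variable [Nonempty T] (hij : (D.piece i ∩ D'.piece j).Nonempty)

theorem meet_domLE_left : DomLE (D.meet D' hij) D :=
  .of_shift i fun k => inter_subset_left.trans_eq <| D.piece_congr <|
    ((Nat.mod_modEq k _).of_dvd (Nat.dvd_lcm_left _ _)).add_left i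

theorem meet_domLE_right : DomLE (D.meet D' hij) D' :=
  .of_shift j fun k => inter_subset_right.trans_eq <| D'.piece_congr <|
    ((Nat.mod_modEq k _).of_dvd (Nat.dvd_lcm_right _ _)).add_left j

end SInvDomain

theorem CyclicEq.of_minimalDom_of_meet {M T : Type*} [TopologicalSpace M] [Nonempty T]
    {f : M → T → M} {D D' : SInvDomain f} (hD : MinimalDom D) (hD' : MinimalDom D')
    (hmeet : ∃ (i : Fin D.r) (j : Fin D'.r), (D.U i ∩ D'.U j).Nonempty) : CyclicEq D D' := by
  obtain ⟨i, j, hij⟩ := hmeet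
  rw [← D.piece_val, ← D'.piece_val] at hij
  exact (hD _ (D.meet_domLE_left D' hij)).symm.trans (hD' _ (D.meet_domLE_right D' hij))

theorem disjoint_carrier_of_not_cyclicEq {M T : Type*} [TopologicalSpace M] [Nonempty T]
    {f : M → T → M} {D D' : SInvDomain f} (hD : MinimalDom D) (hD' : MinimalDom D')
    (hne : ¬ CyclicEq D D') : Disjoint D.carrier D'.carrier := by
  refine Set.disjoint_left.2 fun z hz hz' => hne (.of_minimalDom_of_meet hD hD' ?_)
  obtain ⟨i, hi⟩ := mem_iUnion.1 hz
  obtain ⟨j, hj⟩ := mem_iUnion.1 hz'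
  exact ⟨i, j, z, hi, hj⟩

theorem statement9_general
    (n : ℕ) (a : EuclideanSpace ℝ (Fin n)) (ε : ℝ)
    (a₀ : PSpace n a ε)
    (M : Type*) [MetricSpace M]
    (f : M → PSpace n a ε → M)
    (ℳ ℳ' : SInvDomain f) (hmin : MinimalDom ℳ) (hmin' : MinimalDom ℳ')
    (hmeet : ∃ (i : Fin ℳ.r) (j : Fin ℳ'.r), (ℳ.U i ∩ ℳ'.U j).Nonempty) :
    (CyclicEq ℳ ℳ' ∧ ℳ.r = ℳ'.r ∧ ℳ.carrier = ℳ'.carrier) ∧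
    ∀ N N' : SInvDomain f, MinimalDom N → MinimalDom N' → ¬ CyclicEq N N' →
      Disjoint N.carrier N'.carrier := by
  have : Nonempty (PSpace n a ε) := ⟨a₀⟩
  have hce : CyclicEq ℳ ℳ' := .of_minimalDom_of_meet hmin hmin' hmeet
  exact ⟨⟨hce, hce.r_eq, hce.carrier_eq⟩, fun N N' hN hN' hne =>
    disjoint_carrier_of_not_cyclicEq hN hN' hne⟩

/-- Minimal domains whose open sets intersect coincide up to cyclic
shift (in particular they have the same period and the same union); consequently,
minimal domains that do not coincide up to cyclic shift have disjoint unions. -/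
theorem statement9
    (n : ℕ) (hn : 1 ≤ n) (a : EuclideanSpace ℝ (Fin n)) (ε : ℝ) (hε : 0 < ε)
    (a₀ : PSpace n a ε) (ha₀ : (a₀ : EuclideanSpace ℝ (Fin n)) = a)
    (ν : Measure (PSpace n a ε))
    (hν : ν = (volume (Metric.closedBall a ε))⁻¹ •
      ((volume : Measure (EuclideanSpace ℝ (Fin n))).comap Subtype.val))
    (νinf : Measure (ℕ → PSpace n a ε)) (hprobν : IsProbabilityMeasure νinf)
    (hνinf : ∀ k : ℕ, νinf.map (fun t (i : Fin k) => t i) = Measure.pi fun _ => ν)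
    (M : Type*) [MetricSpace M] [CompactSpace M] [MeasurableSpace M] [BorelSpace M]
    (m : Measure M) (hmprob : IsProbabilityMeasure m)
    (hmpos : ∀ O : Set M, IsOpen O → O.Nonempty → 0 < m O)
    (f : M → PSpace n a ε → M)
    (hfc : Continuous fun p : M × PSpace n a ε => f p.1 p.2)
    (hfh : ∀ t : PSpace n a ε, IsHomeomorph fun z : M => f z t)
    (hfnull : ∀ (t : PSpace n a ε) (A : Set M), m A = 0 →
      m ((fun z => f z t) '' A) = 0 ∧ m ((fun z => f z t) ⁻¹' A) = 0)
    (ℳ ℳ' : SInvDomain f) (hmin : MinimalDom ℳ) (hmin' : MinimalDom ℳ')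
    (hmeet : ∃ (i : Fin ℳ.r) (j : Fin ℳ'.r), (ℳ.U i ∩ ℳ'.U j).Nonempty) :
    (CyclicEq ℳ ℳ' ∧ ℳ.r = ℳ'.r ∧ ℳ.carrier = ℳ'.carrier) ∧
    ∀ N N' : SInvDomain f, MinimalDom N → MinimalDom N' → ¬ CyclicEq N N' →
      Disjoint N.carrier N'.carrier :=
  statement9_general n a ε a₀ M f ℳ ℳ' hmin hmin' hmeet

end
end

section
/- Assume the setting and hypothesis (A). Let ℳ = (𝒰₀,…,𝒰_{r−1}) be a minimal domain. Then ℳ is randomly transitive: for every z ∈ ⋃ℳ, the set ⋃_{n ≥ 1} f^n({z},Δ) is dense in ⋃ℳ. -/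
open MeasureTheory Metric Set Filter Topology

noncomputable section

/-- `pIter f k z t` depends only on the first `k` entries of `t`. -/
theorem pIter_congr {M T : Type*} (f : M → T → M) (k : ℕ) (z : M) {s s' : ℕ → T}
    (h : ∀ m < k, s m = s' m) : pIter f k z s = pIter f k z s' := by
  induction k with
  | zero => rfl
  | succ k ih =>
    simp only [pIter]
    rw [ih (fun m hm => h m (Nat.lt_succ_of_lt hm)), h k (Nat.lt_succ_self k)]

/-- Arithmetic helper: find a large `k` with prescribed residue of `i + k` mod `r`. -/
theorem exists_mod_ge (r : ℕ) (hr : 0 < r) (i j N : ℕ) (hj : j < r) :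
    ∃ k, N + 1 ≤ k ∧ (i + k) % r = j := by
  refine ⟨r * (N + i + 1) + j - i, ?_, ?_⟩
  · have h1 : N + i + 1 ≤ r * (N + i + 1) := Nat.le_mul_of_pos_left _ hr
    omega
  · have h1 : N + i + 1 ≤ r * (N + i + 1) := Nat.le_mul_of_pos_left _ hr
    have h2 : i + (r * (N + i + 1) + j - i) = j + r * (N + i + 1) := by omega
    rw [h2, Nat.add_mul_mod_self_left, Nat.mod_eq_of_lt hj]

/-- Under hypothesis (A), every minimal domain is randomly transitive:
for every point `z` of its union, the set `⋃_{k ≥ 1} f^k({z},Δ)` is dense in the union. -/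
theorem statement11
    (n : ℕ) (hn : 1 ≤ n) (a : EuclideanSpace ℝ (Fin n)) (ε : ℝ) (hε : 0 < ε)
    (a₀ : PSpace n a ε) (ha₀ : (a₀ : EuclideanSpace ℝ (Fin n)) = a)
    (ν : Measure (PSpace n a ε))
    (hν : ν = (volume (Metric.closedBall a ε))⁻¹ •
      ((volume : Measure (EuclideanSpace ℝ (Fin n))).comap Subtype.val))
    (νinf : Measure (ℕ → PSpace n a ε)) (hprobν : IsProbabilityMeasure νinf)
    (hνinf : ∀ k : ℕ, νinf.map (fun t (i : Fin k) => t i) = Measure.pi fun _ => ν)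
    (M : Type*) [MetricSpace M] [CompactSpace M] [MeasurableSpace M] [BorelSpace M]
    (m : Measure M) (hmprob : IsProbabilityMeasure m)
    (hmpos : ∀ O : Set M, IsOpen O → O.Nonempty → 0 < m O)
    (f : M → PSpace n a ε → M)
    (hfc : Continuous fun p : M × PSpace n a ε => f p.1 p.2)
    (hfh : ∀ t : PSpace n a ε, IsHomeomorph fun z : M => f z t)
    (hfnull : ∀ (t : PSpace n a ε) (A : Set M), m A = 0 →
      m ((fun z => f z t) '' A) = 0 ∧ m ((fun z => f z t) ⁻¹' A) = 0)
    (K : ℕ) (ξ₀ : ℝ) (hξ₀ : 0 < ξ₀)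
    (hypA : ∀ k : ℕ, K ≤ k → ∀ x : M,
      Metric.ball (pIter f k x fun _ => a₀) ξ₀ ⊆ Set.range (pIter f k x))
    (ℳ : SInvDomain f) (hmin : MinimalDom ℳ) :
    ∀ z ∈ ℳ.carrier,
      ℳ.carrier ⊆ closure {y : M | ∃ k : ℕ, 1 ≤ k ∧ ∃ t : ℕ → PSpace n a ε,
        pIter f k z t = y} := by
  intro z hz
  obtain ⟨i, hi⟩ := Set.mem_iUnion.mp hz
  -- The orbit set of `z`.
  set O : Set M := {y : M | ∃ k : ℕ, 1 ≤ k ∧ ∃ t : ℕ → PSpace n a ε, pIter f k z t = y} with hOdef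
  set IC : Set M := interior (closure O) with hICdef
  -- Each random map sends the orbit set into itself.
  have hO : ∀ s : PSpace n a ε, Set.MapsTo (fun x => f x s) O O := by
    rintro s y ⟨k, hk, t, ht⟩
    refine ⟨k + 1, le_trans hk (Nat.le_succ k), Function.update t k s, ?_⟩
    have hagree : ∀ m < k, Function.update t k s m = t m := by
      intro m hm
      exact Function.update_of_ne (Nat.ne_of_lt hm) _ _
    simp only [pIter]
    rw [pIter_congr f k z hagree, ht, Function.update_self]
  -- Each random map sends `IC` into itself.
  have hfIC : ∀ s : PSpace n a ε, Set.MapsTo (fun x => f x s) IC IC := by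
    intro s
    have hcl : Set.MapsTo (fun x => f x s) (closure O) (closure O) :=
      (hO s).closure (hfh s).continuous
    have hopen : IsOpen ((fun x => f x s) '' IC) :=
      (hfh s).isOpenMap _ isOpen_interior
    have hsub : (fun x => f x s) '' IC ⊆ closure O :=
      (Set.image_mono interior_subset).trans hcl.image_subset
    exact Set.mapsTo_iff_image_subset.mpr (interior_maximal hsub hopen)
  have hIC : ∀ (k : ℕ) (t : ℕ → PSpace n a ε) (x : M), x ∈ IC → pIter f k x t ∈ IC := by
    intro k t
    induction k with
    | zero => intro x hx; exact hx
    | succ k ih => intro x hx; exact hfIC (t k) (ih x hx)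
  -- Each `ℳ.U j` meets the interior of the orbit closure.
  have hnonempty : ∀ j : Fin ℳ.r, (ℳ.U j ∩ IC).Nonempty := by
    intro j
    obtain ⟨k, hkK, hkj⟩ := exists_mod_ge ℳ.r ℳ.r_pos i j K j.isLt
    have hk1 : 1 ≤ k := by omega
    refine ⟨pIter f k z (fun _ => a₀), ?_, ?_⟩
    · have := ℳ.invariant k hk1 i z hi (fun _ => a₀)
      have hidx : (⟨((i : ℕ) + k) % ℳ.r, Nat.mod_lt _ ℳ.r_pos⟩ : Fin ℳ.r) = j :=
        Fin.ext hkj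
      rwa [hidx] at this
    · have hball : Metric.ball (pIter f k z fun _ => a₀) ξ₀ ⊆ O := by
        intro w hw
        obtain ⟨t, ht⟩ := hypA k (by omega) z hw
        exact ⟨k, hk1, t, ht⟩
      have : Metric.ball (pIter f k z fun _ => a₀) ξ₀ ⊆ IC :=
        interior_maximal (hball.trans subset_closure) Metric.isOpen_ball
      exact this (Metric.mem_ball_self hξ₀)
  -- The restricted domain.
  let D' : SInvDomain f :=
    { r := ℳ.r
      r_pos := ℳ.r_pos
      U := fun j => ℳ.U j ∩ IC
      isOpen := fun j => (ℳ.isOpen j).inter isOpen_interior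
      nonempty := hnonempty
      separated := by
        intro j j' hjj'
        have h1 : closure (ℳ.U j ∩ IC) ∩ closure (ℳ.U j' ∩ IC) ⊆
            closure (ℳ.U j) ∩ closure (ℳ.U j') :=
          Set.inter_subset_inter (closure_mono Set.inter_subset_left)
            (closure_mono Set.inter_subset_left)
        rw [ℳ.separated j j' hjj'] at h1
        exact Set.subset_empty_iff.mp h1
      invariant := by
        intro k hk j x hx t
        exact ⟨ℳ.invariant k hk j x hx.1 t, hIC k t x hx.2⟩ }
  have hle : DomLE D' ℳ := ⟨0, 0, fun k _ => Set.inter_subset_left⟩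
  obtain ⟨p, p', hcyc⟩ := hmin D' hle
  -- Every piece of `ℳ` is contained in the closure of the orbit set.
  intro y hy
  obtain ⟨j, hj⟩ := Set.mem_iUnion.mp hy
  obtain ⟨k, hk1, hkj⟩ := exists_mod_ge ℳ.r ℳ.r_pos p' j 0 j.isLt
  have hcyck := hcyc k (by omega)
  have hidx : (⟨(p' + k) % ℳ.r, Nat.mod_lt _ ℳ.r_pos⟩ : Fin ℳ.r) = j := Fin.ext hkj
  rw [hidx] at hcyck
  have hysub : y ∈ D'.U ⟨(p + k) % D'.r, Nat.mod_lt _ D'.r_pos⟩ := hcyck ▸ hj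
  have : y ∈ interior (closure O) := hysub.2
  exact interior_subset this

end
end

section
/- Assume the setting and hypothesis (B). Fix z ∈ M and let μ_n = (1/n) Σ_{j=1}^{n} f^j(z,ν^∞), where f^j(z,ν^∞) denotes the pushforward of ν^∞ under t ↦ f^j(z,t). Then every weak-* accumulation point μ_∞ of the sequence (μ_n) is a stationary probability measure on M, and μ_∞ is absolutely continuous with respect to m. -/
open MeasureTheory Metric Set Filter Topology

noncomputable section

open scoped ENNReal NNReal

lemma pIter_succ {M T : Type*} (f : M → T → M) (k : ℕ) (z : M) (t : ℕ → T) :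
    pIter f (k+1) z t = f (pIter f k z t) (t k) := rfl

lemma pIter_congr_s12 {M T : Type*} (f : M → T → M) :
    ∀ (k : ℕ) (z : M) {t t' : ℕ → T}, (∀ i, i < k → t i = t' i) →
      pIter f k z t = pIter f k z t'
  | 0, _, _, _, _ => rfl
  | k+1, z, t, t', h => by
    rw [pIter_succ, pIter_succ, pIter_congr_s12 f k z (fun i hi => h i (Nat.lt_succ_of_lt hi)),
      h k (Nat.lt_succ_self k)]

lemma pIter_continuous₂ {M T : Type*} [TopologicalSpace M] [TopologicalSpace T] {f : M → T → M}
    (hf : Continuous fun p : M × T => f p.1 p.2) (k : ℕ) :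
    Continuous fun p : M × (ℕ → T) => pIter f k p.1 p.2 := by
  induction k with
  | zero => exact continuous_fst
  | succ k ih => exact hf.comp (ih.prodMk ((continuous_apply k).comp continuous_snd))

lemma aux_integrable_of_compact {X : Type*} [TopologicalSpace X] [CompactSpace X]
    [MeasurableSpace X] [OpensMeasurableSpace X] (μ : Measure X) [IsFiniteMeasure μ]
    {g : X → ℝ} (hg : Continuous g) : Integrable g μ := by
  obtain ⟨C, hC⟩ := (isCompact_univ.image hg).isBounded.exists_norm_le
  refine ⟨hg.aestronglyMeasurable, HasFiniteIntegral.of_bounded (C := C) ?_⟩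
  exact ae_of_all _ fun x => hC _ (Set.mem_image_of_mem g (Set.mem_univ x))

def auxExt {T : Type*} (a₀ : T) (k : ℕ) (s : Fin k → T) : ℕ → T :=
  fun i => if h : i < k then s ⟨i, h⟩ else a₀

lemma auxExt_res {T : Type*} (a₀ : T) (k : ℕ) (t : ℕ → T) (i : ℕ) (hi : i < k) :
    auxExt a₀ k (fun j : Fin k => t j) i = t i := by simp [auxExt, hi]

lemma auxExt_continuous {T : Type*} [TopologicalSpace T] (a₀ : T) (k : ℕ) :
    Continuous (auxExt a₀ k) := by
  refine continuous_pi fun i => ?_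
  by_cases h : i < k
  · simpa only [auxExt, dif_pos h] using continuous_apply (⟨i, h⟩ : Fin k)
  · simpa only [auxExt, dif_neg h] using continuous_const


/-- Under hypothesis (B), every weak-* accumulation point of the
averages `μ_n = (1/n) Σ_{j=1}^n f^j(z,ν^∞)` is a stationary probability measure,
absolutely continuous with respect to `m`. -/
theorem statement12
    (n : ℕ) (hn : 1 ≤ n) (a : EuclideanSpace ℝ (Fin n)) (ε : ℝ) (hε : 0 < ε)
    (a₀ : PSpace n a ε) (ha₀ : (a₀ : EuclideanSpace ℝ (Fin n)) = a)
    (ν : Measure (PSpace n a ε))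
    (hν : ν = (volume (Metric.closedBall a ε))⁻¹ •
      ((volume : Measure (EuclideanSpace ℝ (Fin n))).comap Subtype.val))
    (νinf : Measure (ℕ → PSpace n a ε)) (hprobν : IsProbabilityMeasure νinf)
    (hνinf : ∀ k : ℕ, νinf.map (fun t (i : Fin k) => t i) = Measure.pi fun _ => ν)
    (M : Type*) [MetricSpace M] [CompactSpace M] [MeasurableSpace M] [BorelSpace M]
    (m : Measure M) (hmprob : IsProbabilityMeasure m)
    (hmpos : ∀ O : Set M, IsOpen O → O.Nonempty → 0 < m O)
    (f : M → PSpace n a ε → M)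
    (hfc : Continuous fun p : M × PSpace n a ε => f p.1 p.2)
    (hfh : ∀ t : PSpace n a ε, IsHomeomorph fun z : M => f z t)
    (hfnull : ∀ (t : PSpace n a ε) (A : Set M), m A = 0 →
      m ((fun z => f z t) '' A) = 0 ∧ m ((fun z => f z t) ⁻¹' A) = 0)
    (K : ℕ)
    (hypB : ∀ k : ℕ, K ≤ k → ∀ x : M, νinf.map (pIter f k x) ≪ m)
    (z : M) (μinfty : Measure M) (hμprob : IsProbabilityMeasure μinfty)
    (hacc : ∃ ns : ℕ → ℕ, StrictMono ns ∧ (∀ i, 1 ≤ ns i) ∧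
      ∀ φ : C(M, ℝ),
        Tendsto (fun i : ℕ => (ns i : ℝ)⁻¹ *
            ∑ j ∈ Finset.range (ns i), ∫ t, φ (pIter f (j + 1) z t) ∂νinf)
          atTop (𝓝 (∫ x, φ x ∂μinfty))) :
    Stationary f ν μinfty ∧ μinfty ≪ m := by
  haveI : CompactSpace (PSpace n a ε) := isCompact_iff_compactSpace.mp (isCompact_closedBall a ε)
  haveI hνP : IsProbabilityMeasure ν := by
    constructor
    rw [hν, Measure.smul_apply,
      (MeasurableEmbedding.subtype_coe measurableSet_closedBall).comap_apply,
      Set.image_univ, Subtype.range_coe, smul_eq_mul]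
    exact ENNReal.inv_mul_cancel (measure_closedBall_pos volume a hε).ne'
      measure_closedBall_lt_top.ne
  -- the transition operator on continuous functions
  have hPc : ∀ φ : C(M, ℝ), Continuous fun x : M => ∫ t, φ (f x t) ∂ν := by
    intro φ
    refine continuous_of_dominated (bound := fun _ => ‖BoundedContinuousFunction.mkOfCompact φ‖)
      ?_ ?_ (integrable_const _) ?_
    · intro x
      exact (φ.continuous.comp (hfc.comp (Continuous.prodMk_right x))).aestronglyMeasurable
    · intro x
      exact ae_of_all _ fun t =>
        (BoundedContinuousFunction.mkOfCompact φ).norm_coe_le_norm (f x t)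
    · exact ae_of_all _ fun t =>
        φ.continuous.comp (hfc.comp (continuous_id.prodMk continuous_const))
  set P : C(M, ℝ) → C(M, ℝ) := fun φ => ⟨fun x => ∫ t, φ (f x t) ∂ν, hPc φ⟩ with hPdef
  -- marginals
  have hres : ∀ k : ℕ, Measurable fun (t : ℕ → PSpace n a ε) (i : Fin k) => t i :=
    fun k => measurable_pi_lambda _ fun i => measurable_pi_apply _
  have key_int : ∀ (j : ℕ) (g : (Fin j → PSpace n a ε) → ℝ), Continuous g →
      ∫ t, g (fun i : Fin j => t i) ∂νinf = ∫ s, g s ∂(Measure.pi fun _ : Fin j => ν) := by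
    intro j g hg
    rw [← hνinf j, integral_map (hres j).aemeasurable hg.aestronglyMeasurable]
  have hQt : ∀ (j : ℕ) (x : M) (t : ℕ → PSpace n a ε),
      pIter f j x (auxExt a₀ j (fun i : Fin j => t i)) = pIter f j x t := by
    intro j x t
    exact pIter_congr_s12 f j x fun i hi => auxExt_res a₀ j t i hi
  have hQc : ∀ (j : ℕ) (x : M),
      Continuous fun s : Fin j → PSpace n a ε => pIter f j x (auxExt a₀ j s) :=
    fun j x => (pIter_continuous₂ hfc j).comp (continuous_const.prodMk (auxExt_continuous a₀ j))
  -- Chapman–Kolmogorov step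
  have chapman : ∀ (φ : C(M, ℝ)) (x : M) (j : ℕ),
      ∫ t, φ (pIter f (j+1) x t) ∂νinf = ∫ t, (P φ) (pIter f j x t) ∂νinf := by
    intro φ x j
    set Q : (Fin j → PSpace n a ε) → M := fun s => pIter f j x (auxExt a₀ j s) with hQdef
    have hQcont : Continuous Q := hQc j x
    set g : (Fin (j+1) → PSpace n a ε) → ℝ :=
      fun s => φ (f (Q fun i : Fin j => s i.castSucc) (s (Fin.last j))) with hgdef
    have hgcont : Continuous g := by
      refine φ.continuous.comp (hfc.comp (Continuous.prodMk ?_ (continuous_apply (Fin.last j))))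
      exact hQcont.comp (continuous_pi fun i => continuous_apply i.castSucc)
    have lhs1 : ∀ t : ℕ → PSpace n a ε,
        φ (pIter f (j+1) x t) = g (fun i : Fin (j+1) => t i) := by
      intro t
      have h1 : (fun i : Fin j => t ((i.castSucc : Fin (j+1)) : ℕ)) = fun i : Fin j => t i := by
        funext i; simp
      simp only [hgdef, Fin.val_last, h1, hQdef, hQt j x t, pIter_succ]
    have step1 : ∫ t, φ (pIter f (j+1) x t) ∂νinf
        = ∫ s, g s ∂(Measure.pi fun _ : Fin (j+1) => ν) := by
      simp only [lhs1]
      exact key_int (j+1) g hgcont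
    set e := MeasurableEquiv.piFinSuccAbove (fun _ : Fin (j+1) => PSpace n a ε) (Fin.last j)
      with hedef
    have hmp := (measurePreserving_piFinSuccAbove (fun _ : Fin (j+1) => ν) (Fin.last j)).symm e
    have step2 := hmp.integral_comp (MeasurableEquiv.measurableEmbedding e.symm) g
    have hsymm : ∀ p : (PSpace n a ε) × (Fin j → PSpace n a ε),
        g (e.symm p) = φ (f (Q p.2) p.1) := by
      rintro ⟨y, r⟩
      simp only [hedef, MeasurableEquiv.piFinSuccAbove_symm_apply, Fin.insertNthEquiv_apply, hgdef]
      have h2 : (fun i : Fin j =>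
          Fin.insertNth (α := fun _ : Fin (j+1) => PSpace n a ε) (Fin.last j) y r i.castSucc)
          = r := by
        funext i; rw [← Fin.succAbove_last, Fin.insertNth_apply_succAbove]
      rw [h2, Fin.insertNth_apply_same]
    have hint : Integrable (fun p : (PSpace n a ε) × (Fin j → PSpace n a ε) =>
        φ (f (Q p.2) p.1)) (ν.prod (Measure.pi fun _ : Fin j => ν)) := by
      apply aux_integrable_of_compact
      exact φ.continuous.comp (hfc.comp ((hQcont.comp continuous_snd).prodMk continuous_fst))
    have step3 : ∫ p : (PSpace n a ε) × (Fin j → PSpace n a ε),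
        g (e.symm p) ∂(ν.prod (Measure.pi fun _ : Fin j => ν))
        = ∫ r, (P φ) (Q r) ∂(Measure.pi fun _ : Fin j => ν) := by
      simp only [hsymm]
      exact integral_prod_symm (fun p : (PSpace n a ε) × (Fin j → PSpace n a ε) =>
        φ (f (Q p.2) p.1)) hint
    have step4 : ∫ r, (P φ) (Q r) ∂(Measure.pi fun _ : Fin j => ν)
        = ∫ t, (P φ) (pIter f j x t) ∂νinf := by
      rw [← key_int j (fun r => (P φ) (Q r)) ((P φ).continuous.comp hQcont)]
      simp only [hQdef, hQt j x]
    rw [step1, ← step2, step3, step4]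
  -- iterated transition identity
  have iterEq : ∀ (k : ℕ) (φ : C(M, ℝ)) (x : M),
      ∫ t, φ (pIter f k x t) ∂νinf = (P^[k] φ) x := by
    intro k
    induction k with
    | zero => intro φ x; simp [pIter]
    | succ k ih =>
        intro φ x
        rw [chapman φ x k, ih (P φ) x, Function.iterate_succ_apply]
  obtain ⟨ns, hmono, hns1, hconv⟩ := hacc
  have hinv : Tendsto (fun i => ((ns i : ℝ))⁻¹) atTop (𝓝 0) :=
    tendsto_inv_atTop_zero.comp (tendsto_natCast_atTop_atTop.comp hmono.tendsto_atTop)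
  have cesaro : ∀ (A : ℕ → ℝ) (C : ℝ), (∀ k, ‖A k‖ ≤ C) → ∀ L L' : ℝ,
      Tendsto (fun i => (ns i : ℝ)⁻¹ * ∑ j ∈ Finset.range (ns i), A j) atTop (𝓝 L) →
      Tendsto (fun i => (ns i : ℝ)⁻¹ * ∑ j ∈ Finset.range (ns i), A (j+1)) atTop (𝓝 L') →
      L = L' := by
    intro A C hAb L L' h1 h2
    have hD : Tendsto (fun i => (ns i : ℝ)⁻¹ * (A (ns i) - A 0)) atTop (𝓝 0) := by
      have hDle : ∀ i, ‖(ns i : ℝ)⁻¹ * (A (ns i) - A 0)‖ ≤ (ns i : ℝ)⁻¹ * (2 * C) := by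
        intro i
        rw [norm_mul, Real.norm_eq_abs ((ns i : ℝ))⁻¹, abs_of_nonneg (by positivity)]
        refine mul_le_mul_of_nonneg_left ?_ (by positivity)
        calc ‖A (ns i) - A 0‖ ≤ ‖A (ns i)‖ + ‖A 0‖ := norm_sub_le _ _
        _ ≤ 2 * C := by have h1' := hAb (ns i); have h2' := hAb 0; linarith
      exact squeeze_zero_norm hDle (by simpa using hinv.mul_const (2 * C))
    have hshift : (fun i => (ns i : ℝ)⁻¹ * ∑ j ∈ Finset.range (ns i), A (j+1))
        = fun i => (ns i : ℝ)⁻¹ * ∑ j ∈ Finset.range (ns i), A j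
          + (ns i : ℝ)⁻¹ * (A (ns i) - A 0) := by
      funext i
      have e1 : ∑ j ∈ Finset.range (ns i + 1), A j
          = (∑ j ∈ Finset.range (ns i), A (j+1)) + A 0 := Finset.sum_range_succ' A (ns i)
      have e2 : ∑ j ∈ Finset.range (ns i + 1), A j
          = (∑ j ∈ Finset.range (ns i), A j) + A (ns i) := Finset.sum_range_succ A (ns i)
      have e3 : ∑ j ∈ Finset.range (ns i), A (j+1)
          = (∑ j ∈ Finset.range (ns i), A j) + (A (ns i) - A 0) := by linarith
      rw [e3, mul_add]
    rw [hshift] at h2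
    have h3 := h2.sub hD
    simp only [add_sub_cancel_right, sub_zero] at h3
    exact tendsto_nhds_unique h1 h3
  -- stationarity
  have hPint : ∀ φ : C(M, ℝ), ∫ x, (P φ) x ∂μinfty = ∫ x, φ x ∂μinfty := by
    intro φ
    obtain ⟨C, hC⟩ := (isCompact_univ.image φ.continuous).isBounded.exists_norm_le
    have hAb : ∀ k : ℕ, ‖∫ t, φ (pIter f (k+1) z t) ∂νinf‖ ≤ C := by
      intro k
      have hb := norm_integral_le_of_norm_le_const (μ := νinf)
        (f := fun t => φ (pIter f (k+1) z t)) (C := C)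
        (ae_of_all _ fun t => hC _ (Set.mem_image_of_mem _ (Set.mem_univ _)))
      simpa [measure_univ] using hb
    have hre : ∀ j : ℕ, (∫ t, (P φ) (pIter f (j+1) z t) ∂νinf)
        = ∫ t, φ (pIter f (j+1+1) z t) ∂νinf := fun j => (chapman φ z (j+1)).symm
    have h2 := hconv (P φ)
    simp only [hre] at h2
    exact (cesaro (fun j => ∫ t, φ (pIter f (j+1) z t) ∂νinf) C hAb _ _ (hconv φ) h2).symm
  have hstat : Stationary f ν μinfty := fun φ => hPint φ
  refine ⟨hstat, ?_⟩
  -- absolute continuity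
  haveI := hprobν
  haveI := hμprob
  have statIter : ∀ (k : ℕ) (φ : C(M, ℝ)),
      ∫ x, (P^[k] φ) x ∂μinfty = ∫ x, φ x ∂μinfty := by
    intro k
    induction k with
    | zero => intro φ; simp
    | succ k ih =>
        intro φ
        rw [Function.iterate_succ_apply, ih (P φ)]
        exact hPint φ
  have hPpos : ∀ (φ : C(M, ℝ)), (∀ y, 0 ≤ φ y) → ∀ x, 0 ≤ (P φ) x :=
    fun φ h x => integral_nonneg fun t => h _
  have hiterpos : ∀ (k : ℕ) (φ : C(M, ℝ)), (∀ y, 0 ≤ φ y) → ∀ x, 0 ≤ (P^[k] φ) x := by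
    intro k
    induction k with
    | zero => intro φ h x; simpa using h x
    | succ k ih =>
        intro φ h x
        rw [Function.iterate_succ_apply]
        exact ih (P φ) (hPpos φ h) x
  have hκm : Measurable fun x : M => νinf.map (pIter f K x) := by
    apply Measure.measurable_of_measurable_coe
    intro s hs
    have hjoint : Measurable fun p : M × (ℕ → PSpace n a ε) => pIter f K p.1 p.2 :=
      (pIter_continuous₂ hfc K).measurable
    have h1 : ∀ x : M, (νinf.map (pIter f K x)) s
        = νinf (Prod.mk x ⁻¹' ((fun p : M × (ℕ → PSpace n a ε) => pIter f K p.1 p.2) ⁻¹' s)) := by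
      intro x
      rw [Measure.map_apply (show Measurable (pIter f K x) from ((pIter_continuous₂ hfc K).comp (Continuous.prodMk_right x)).measurable) hs]
      rfl
    simp only [h1]
    exact measurable_measure_prodMk_left (hjoint hs)
  have hbind : μinfty = μinfty.bind (fun x => νinf.map (pIter f K x)) := by
    refine ext_of_forall_lintegral_eq_of_IsFiniteMeasure fun ψ => ?_
    have hψm : Measurable fun x : M => (ψ x : ℝ≥0∞) :=
      measurable_coe_nnreal_ennreal.comp ψ.continuous.measurable
    rw [Measure.lintegral_bind hκm.aemeasurable hψm.aemeasurable]
    set φψ : C(M, ℝ) := ⟨fun x => (ψ x : ℝ), NNReal.continuous_coe.comp ψ.continuous⟩ with hφψ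
    have hinner : ∀ x : M, ∫⁻ y, (ψ y : ℝ≥0∞) ∂(νinf.map (pIter f K x))
        = ENNReal.ofReal ((P^[K] φψ) x) := by
      intro x
      rw [lintegral_map hψm (show Measurable (pIter f K x) from ((pIter_continuous₂ hfc K).comp (Continuous.prodMk_right x)).measurable)]
      have hl : ∫⁻ t, ((ψ (pIter f K x t) : ℝ≥0) : ℝ≥0∞) ∂νinf
          = ENNReal.ofReal (∫ t, ((ψ (pIter f K x t) : ℝ≥0) : ℝ) ∂νinf) :=
        lintegral_coe_eq_integral (fun t => ψ (pIter f K x t))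
          (aux_integrable_of_compact νinf (NNReal.continuous_coe.comp
            (ψ.continuous.comp ((pIter_continuous₂ hfc K).comp (Continuous.prodMk_right x)))))
      rw [hl]
      exact congrArg ENNReal.ofReal (iterEq K φψ x)
    simp only [hinner]
    rw [← ofReal_integral_eq_lintegral_ofReal
      (aux_integrable_of_compact μinfty (P^[K] φψ).continuous)
      (ae_of_all _ (hiterpos K φψ (fun y => NNReal.coe_nonneg (ψ y)))),
      statIter K φψ,
      lintegral_coe_eq_integral (fun x => ψ x)
        (aux_integrable_of_compact μinfty (NNReal.continuous_coe.comp ψ.continuous))]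
    rfl
  intro s hs0
  obtain ⟨s', hss', hs'meas, hs'0⟩ := exists_measurable_superset_of_null hs0
  have hz : μinfty s' = 0 := by
    rw [hbind, Measure.bind_apply hs'meas hκm.aemeasurable]
    have hnull : ∀ x : M, (νinf.map (pIter f K x)) s' = 0 := fun x => hypB K le_rfl x hs'0
    simp [hnull]
  exact measure_mono_null hss' hz


end
end
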